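/- arXiv:1710.09010 — 4 statements merged into one kernel-verified Lean document; each statement's English description precedes it below -/
import Mathlib

section
/- Monotonicity of Rényi divergence for subprobability measures: let p, q : I → ℝ≥0 be a subprobability mass functions on a finite set I with ∑ p(i) > 0 and p absolutely continuous w.r.t. q. Then for 1 < α ≤ β, (1/(α−1)) · log(∑ p(i)^α q(i)^{1−α}) ≤ (1/(β−1)) · log(∑ p(i)^β q(i)^{1−β}). -/
open Finset

/-- Rényi divergence of order `α` between mass functions on a finite set. -/
noncomputable def renyiD {I : Type*} [Fintype I] (α : ℝ) (p q : I → ℝ) : ℝ :=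
  (1 / (α - 1)) * Real.log (∑ i, p i ^ α * q i ^ (1 - α))

/-!
Writing `A i = (p i / q i) ^ (β - 1)` and `c = (α - 1) / (β - 1) ∈ (0, 1]`, the two sums are
`∑ p i * A i ^ c` and `∑ p i * A i`. Concavity of `t ↦ t ^ c` (Jensen's inequality for the
subprobability weights `p`) gives `∑ p i * A i ^ c ≤ (∑ p i * A i) ^ c`; taking logarithms and
dividing by `α - 1` yields the claim.
-/

theorem Finset.sum_mul_rpow_le_rpow_sum_mul {ι : Type*} (s : Finset ι) {w x : ι → ℝ}
    (hw : ∀ i ∈ s, 0 ≤ w i) (hw₁ : ∑ i ∈ s, w i ≤ 1) (hx : ∀ i ∈ s, 0 ≤ x i)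
    {c : ℝ} (hc₀ : 0 ≤ c) (hc₁ : c ≤ 1) :
    ∑ i ∈ s, w i * x i ^ c ≤ (∑ i ∈ s, w i * x i) ^ c := by
  -- the missing mass `1 - ∑ w` is placed at `0`, where `t ^ c` is nonnegative
  let w' : Option ι → ℝ := fun o => o.elim (1 - ∑ i ∈ s, w i) w
  let x' : Option ι → ℝ := fun o => o.elim 0 x
  have jensen := (Real.concaveOn_rpow hc₀ hc₁).le_map_sum (t := insertNone s) (w := w') (p := x')
    (by rintro (_ | i) hi
        · simpa [w'] using hw₁
        · exact hw i (by simpa using hi))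
    (by simp [w', sum_insertNone])
    (by rintro (_ | i) hi
        · simp [x']
        · exact hx i (by simpa using hi))
  simp only [sum_insertNone, smul_eq_mul, w', x', Option.elim, mul_zero, zero_add] at jensen
  have : 0 ≤ (1 - ∑ i ∈ s, w i) * (0 : ℝ) ^ c :=
    mul_nonneg (by linarith) (Real.rpow_nonneg le_rfl c)
  linarith

theorem Real.rpow_mul_rpow_one_sub_eq_mul_div_rpow {p q γ : ℝ} (hp : 0 ≤ p) (hq : 0 ≤ q)
    (hpq : q = 0 → p = 0) (hγ : γ ≠ 0) :
    p ^ γ * q ^ (1 - γ) = p * (p / q) ^ (γ - 1) := by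
  rcases hp.eq_or_lt with rfl | hp
  · simp [Real.zero_rpow hγ]
  have hq : 0 < q := hq.lt_of_ne fun h => hp.ne' (hpq h.symm)
  rw [Real.div_rpow hp.le hq.le, Real.rpow_sub_one hp.ne', Real.rpow_sub hq, Real.rpow_one,
    Real.rpow_sub_one hq.ne']
  field_simp

theorem Finset.sum_rpow_mul_rpow_one_sub_pos {ι : Type*} (s : Finset ι) {p q : ι → ℝ}
    (hp : ∀ i ∈ s, 0 ≤ p i) (hq : ∀ i ∈ s, 0 ≤ q i) (hpq : ∀ i ∈ s, q i = 0 → p i = 0)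
    (hs : 0 < ∑ i ∈ s, p i) (γ : ℝ) :
    0 < ∑ i ∈ s, p i ^ γ * q i ^ (1 - γ) := by
  obtain ⟨i, hi, hpi⟩ := exists_ne_zero_of_sum_ne_zero hs.ne'
  have hpi : 0 < p i := (hp i hi).lt_of_ne' hpi
  have hqi : 0 < q i := (hq i hi).lt_of_ne' fun h => hpi.ne' (hpq i hi h)
  exact sum_pos'
    (fun j hj => mul_nonneg (Real.rpow_nonneg (hp j hj) _) (Real.rpow_nonneg (hq j hj) _))
    ⟨i, hi, mul_pos (Real.rpow_pos_of_pos hpi _) (Real.rpow_pos_of_pos hqi _)⟩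

theorem renyi_monotone_order_subprob_general {I : Type*} [Fintype I] (p q : I → ℝ)
    (hp0 : ∀ i, 0 ≤ p i) (hq0 : ∀ i, 0 ≤ q i)
    (hps : ∑ i, p i ≤ 1)
    (hppos : 0 < ∑ i, p i)
    (hac : ∀ i, q i = 0 → p i = 0)
    (α β : ℝ) (hα : 1 < α) (hαβ : α ≤ β) :
    (1 / (α - 1)) * Real.log (∑ i, p i ^ α * q i ^ (1 - α)) ≤
      (1 / (β - 1)) * Real.log (∑ i, p i ^ β * q i ^ (1 - β)) := by
  have hα₁ : α - 1 ≠ 0 := by linarith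
  have hβ₁ : 0 < β - 1 := by linarith
  set c := (α - 1) / (β - 1) with hc
  have hc₀ : 0 ≤ c := div_nonneg (by linarith) hβ₁.le
  have hc₁ : c ≤ 1 := (div_le_one hβ₁).2 (by linarith)
  set A : I → ℝ := fun i => (p i / q i) ^ (β - 1)
  have hA : ∀ i, 0 ≤ A i := fun i => Real.rpow_nonneg (div_nonneg (hp0 i) (hq0 i)) _
  have hsumβ : ∑ i, p i ^ β * q i ^ (1 - β) = ∑ i, p i * A i := sum_congr rfl fun i _ =>
    Real.rpow_mul_rpow_one_sub_eq_mul_div_rpow (hp0 i) (hq0 i) (hac i) (by linarith)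
  have hsumα : ∑ i, p i ^ α * q i ^ (1 - α) = ∑ i, p i * A i ^ c := sum_congr rfl fun i _ => by
    rw [Real.rpow_mul_rpow_one_sub_eq_mul_div_rpow (hp0 i) (hq0 i) (hac i) (by linarith),
      ← Real.rpow_mul (div_nonneg (hp0 i) (hq0 i)), mul_div_cancel₀ _ hβ₁.ne']
  have hjensen : ∑ i, p i * A i ^ c ≤ (∑ i, p i * A i) ^ c :=
    sum_mul_rpow_le_rpow_sum_mul univ (fun i _ => hp0 i) hps (fun i _ => hA i) hc₀ hc₁
  have hposα := sum_rpow_mul_rpow_one_sub_pos univ (fun i _ => hp0 i) (fun i _ => hq0 i)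
    (fun i _ => hac i) hppos α
  have hposβ := sum_rpow_mul_rpow_one_sub_pos univ (fun i _ => hp0 i) (fun i _ => hq0 i)
    (fun i _ => hac i) hppos β
  calc (1 / (α - 1)) * Real.log (∑ i, p i ^ α * q i ^ (1 - α))
      ≤ (1 / (α - 1)) * Real.log ((∑ i, p i * A i) ^ c) :=
        mul_le_mul_of_nonneg_left (Real.log_le_log hposα (hsumα ▸ hjensen))
          (one_div_nonneg.2 (by linarith))
    _ = (1 / (β - 1)) * Real.log (∑ i, p i ^ β * q i ^ (1 - β)) := by
        rw [Real.log_rpow (hsumβ ▸ hposβ), hsumβ, hc]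
        field_simp

/-- Monotonicity of Rényi divergence in the order, for subprobability mass
functions with positive total mass and `p ≪ q`. -/
theorem renyi_monotone_order_subprob {I : Type*} [Fintype I] (p q : I → ℝ)
    (hp0 : ∀ i, 0 ≤ p i) (hq0 : ∀ i, 0 ≤ q i)
    (hps : ∑ i, p i ≤ 1) (hqs : ∑ i, q i ≤ 1)
    (hppos : 0 < ∑ i, p i)
    (hac : ∀ i, q i = 0 → p i = 0)
    (α β : ℝ) (hα : 1 < α) (hαβ : α ≤ β) :
    (1 / (α - 1)) * Real.log (∑ i, p i ^ α * q i ^ (1 - α)) ≤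
      (1 / (β - 1)) * Real.log (∑ i, p i ^ β * q i ^ (1 - β)) :=
  renyi_monotone_order_subprob_general p q hp0 hq0 hps hppos hac α β hα hαβ
end

section
/- Finite composability of Rényi divergence: let I, J be finite sets, d₁, d₂ subprobability mass functions on J, and h, k : J → (subprobability mass functions on I). Define the pushforwards h♯d₁ (i) = ∑_{j} d₁(j)·h(j)(i) and similarly k♯d₂. Then D^α(h♯d₁ ‖ k♯d₂) ≤ D^α(d₁‖d₂) + sup_{j∈J} D^α(h(j)‖k(j)) for every α > 1. -/
/-!
For `α > 1` the map `(a, b) ↦ a ^ α * b ^ (1 - α) = b * (a / b) ^ α` is the perspective of the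
convex function `t ↦ t ^ α`; being convex and positively homogeneous it is subadditive, which is
Jensen's inequality with weights `b j / ∑ b`. Applied at each point `i` of the pushforwards,
it bounds the power sum of `(h♯d₁, k♯d₂)` by
`∑ⱼ d₁ j ^ α d₂ j ^ (1 - α) · ∑ᵢ h j i ^ α k j i ^ (1 - α)`, hence by the power sum of `(d₁, d₂)` times the largest power sum of `(h j, k j)`. Taking
`(α - 1)⁻¹ * log` turns the product into the claimed sum.
-/

open Finset ENNReal

/-- Rényi divergence of order `α` between (sub)probability mass functions on a
finite set, valued in the extended reals, with the conventions
`0 ^ α * 0 ^ (1-α) = 0` and `x ^ α * 0 ^ (1-α) = ∞` for `x > 0` (from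
`ENNReal.rpow`), and `ENNReal.log 0 = ⊥`, `ENNReal.log ∞ = ⊤`. -/
noncomputable def renyiDE {I : Type*} [Fintype I] (α : ℝ) (p q : I → ℝ≥0∞) : EReal :=
  (((α - 1)⁻¹ : ℝ) : EReal) * ENNReal.log (∑ i, p i ^ α * q i ^ (1 - α))

namespace ENNReal

variable {α : ℝ}

theorem mul_div_rpow_eq_rpow_mul_rpow_one_sub {a b : ℝ≥0∞} (hα : 0 < α) (hb : b ≠ ∞)
    (hab : b = 0 → a = 0) : b * (a / b) ^ α = a ^ α * b ^ (1 - α) := by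
  rcases eq_or_ne b 0 with rfl | hb₀
  · simp [hab rfl, hα]
  · rw [div_rpow_of_nonneg _ _ hα.le, rpow_sub 1 α hb₀ hb, rpow_one, div_eq_mul_inv,
      div_eq_mul_inv]
    ring

theorem rpow_sum_mul_rpow_sum_one_sub_le {ι : Type*} (s : Finset ι) (a b : ι → ℝ≥0∞)
    (hb : ∀ j ∈ s, b j ≠ ∞) (hα : 1 < α) :
    (∑ j ∈ s, a j) ^ α * (∑ j ∈ s, b j) ^ (1 - α) ≤ ∑ j ∈ s, a j ^ α * b j ^ (1 - α) := by
  have hα₀ : 0 < α := zero_lt_one.trans hα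
  by_cases hab : ∀ j ∈ s, b j = 0 → a j = 0
  swap
  · obtain ⟨j, hj, hbj, haj⟩ : ∃ j ∈ s, b j = 0 ∧ a j ≠ 0 := by simpa using hab
    have hterm : a j ^ α * b j ^ (1 - α) = ∞ := by
      rw [hbj, zero_rpow_of_neg (by linarith), mul_top (by simp [haj, hα₀.le])]
    exact le_top.trans (sum_eq_top.2 ⟨j, hj, hterm⟩).ge
  set A := ∑ j ∈ s, a j
  set B := ∑ j ∈ s, b j
  have hB : B ≠ ∞ := sum_ne_top.2 hb
  rcases eq_or_ne B 0 with hB₀ | hB₀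
  · have hA₀ : A = 0 :=
      Finset.sum_eq_zero fun j hj => hab j hj (Finset.sum_eq_zero_iff.1 hB₀ j hj)
    simp [hA₀, hα₀]
  have hweights : ∑ j ∈ s, b j / B = 1 := by
    simp_rw [div_eq_mul_inv, ← Finset.sum_mul]
    exact ENNReal.mul_inv_cancel hB₀ hB
  have hmean : ∑ j ∈ s, b j / B * (a j / b j) = A / B := by
    rw [div_eq_mul_inv A, Finset.sum_mul]
    refine Finset.sum_congr rfl fun j hj => ?_
    rw [div_eq_mul_inv (b j), mul_right_comm,
      ENNReal.mul_div_cancel' (hab j hj) fun h => absurd h (hb j hj)]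
  calc A ^ α * B ^ (1 - α) = B * (A / B) ^ α :=
        (mul_div_rpow_eq_rpow_mul_rpow_one_sub hα₀ hB fun h => absurd h hB₀).symm
    _ ≤ B * ∑ j ∈ s, b j / B * (a j / b j) ^ α := by
        rw [← hmean]
        gcongr
        exact rpow_arith_mean_le_arith_mean_rpow s _ _ hweights hα.le
    _ = ∑ j ∈ s, b j * (a j / b j) ^ α := by
        rw [Finset.mul_sum]
        refine Finset.sum_congr rfl fun j _ => ?_
        rw [← mul_assoc, ENNReal.mul_div_cancel' (fun h => absurd h hB₀) fun h => absurd h hB]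
    _ = ∑ j ∈ s, a j ^ α * b j ^ (1 - α) := Finset.sum_congr rfl fun j hj =>
        mul_div_rpow_eq_rpow_mul_rpow_one_sub hα₀ (hb j hj) (hab j hj)

end ENNReal

theorem EReal.coe_mul_log_iSup_of_pos {ι : Type*} [Fintype ι] {c : ℝ} (hc : 0 < c)
    (x : ι → ℝ≥0∞) : (c : EReal) * log (⨆ i, x i) = ⨆ i, (c : EReal) * log (x i) := by
  simp_rw [← Finset.sup_univ_eq_iSup]
  refine Finset.apply_sup_eq_sup_comp_of_linearOrder (fun y => (c : EReal) * log y)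
    (fun y z hyz => mul_le_mul_of_nonneg_left (log_monotone hyz) (EReal.coe_nonneg.2 hc.le)) ?_
  simp [EReal.coe_mul_bot_of_pos hc]

theorem sum_rpow_mul_rpow_pushforward_le {J I : Type*} [Fintype J] [Fintype I]
    (d₁ d₂ : J → ℝ≥0∞) (h k : J → I → ℝ≥0∞) (hd₂ : ∀ j, d₂ j ≠ ∞) (hk : ∀ j i, k j i ≠ ∞)
    {α : ℝ} (hα : 1 < α) :
    ∑ i, (∑ j, d₁ j * h j i) ^ α * (∑ j, d₂ j * k j i) ^ (1 - α) ≤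
      (∑ j, d₁ j ^ α * d₂ j ^ (1 - α)) * ⨆ j, ∑ i, h j i ^ α * k j i ^ (1 - α) := by
  calc ∑ i, (∑ j, d₁ j * h j i) ^ α * (∑ j, d₂ j * k j i) ^ (1 - α)
      ≤ ∑ i, ∑ j, (d₁ j * h j i) ^ α * (d₂ j * k j i) ^ (1 - α) :=
        sum_le_sum fun i _ => rpow_sum_mul_rpow_sum_one_sub_le _ _ _
          (fun j _ => mul_ne_top (hd₂ j) (hk j i)) hα
    _ = ∑ j, d₁ j ^ α * d₂ j ^ (1 - α) * ∑ i, h j i ^ α * k j i ^ (1 - α) := by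
        rw [sum_comm]
        refine sum_congr rfl fun j _ => ?_
        rw [mul_sum]
        refine sum_congr rfl fun i _ => ?_
        rw [mul_rpow_of_nonneg _ _ (by linarith), mul_rpow_of_ne_top (hd₂ j) (hk j i),
          mul_mul_mul_comm]
    _ ≤ ∑ j, d₁ j ^ α * d₂ j ^ (1 - α) * ⨆ j, ∑ i, h j i ^ α * k j i ^ (1 - α) := by
        gcongr with j
        exact le_iSup (fun j => ∑ i, h j i ^ α * k j i ^ (1 - α)) j
    _ = _ := (sum_mul ..).symm

theorem renyi_finite_composable_general {J I : Type*} [Fintype J] [Fintype I]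
    (d₁ d₂ : J → ℝ≥0∞) (h k : J → I → ℝ≥0∞)
    (hd₂ : ∑ j, d₂ j ≤ 1)
    (hk : ∀ j, ∑ i, k j i ≤ 1)
    (α : ℝ) (hα : 1 < α) :
    renyiDE α (fun i => ∑ j, d₁ j * h j i) (fun i => ∑ j, d₂ j * k j i) ≤
      renyiDE α d₁ d₂ + ⨆ j, renyiDE α (h j) (k j) := by
  have hd₂_ne_top j : d₂ j ≠ ∞ :=
    ((single_le_sum (fun _ _ => zero_le) (mem_univ j)).trans_lt (hd₂.trans_lt one_lt_top)).ne
  have hk_ne_top j i : k j i ≠ ∞ :=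
    ((single_le_sum (fun _ _ => zero_le) (mem_univ i)).trans_lt ((hk j).trans_lt one_lt_top)).ne
  have hc : (0 : ℝ) < (α - 1)⁻¹ := inv_pos.2 (sub_pos.2 hα)
  have hc' : (0 : EReal) ≤ ((α - 1)⁻¹ : ℝ) := EReal.coe_nonneg.2 hc.le
  calc renyiDE α (fun i => ∑ j, d₁ j * h j i) (fun i => ∑ j, d₂ j * k j i)
      ≤ ((α - 1)⁻¹ : ℝ) * log ((∑ j, d₁ j ^ α * d₂ j ^ (1 - α)) *
          ⨆ j, ∑ i, h j i ^ α * k j i ^ (1 - α)) :=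
        mul_le_mul_of_nonneg_left (log_monotone
          (sum_rpow_mul_rpow_pushforward_le d₁ d₂ h k hd₂_ne_top hk_ne_top hα)) hc'
    _ = renyiDE α d₁ d₂ + ⨆ j, renyiDE α (h j) (k j) := by
        rw [log_mul_add, EReal.left_distrib_of_nonneg_of_ne_top hc' (EReal.coe_ne_top _),
          EReal.coe_mul_log_iSup_of_pos hc]
        rfl

/-- Finite composability of Rényi divergence: for subprobability mass functions
`d₁, d₂` on a finite set `J` and kernels `h, k : J → subprob(I)`,
`D^α(h♯d₁ ‖ k♯d₂) ≤ D^α(d₁‖d₂) + sup_j D^α(h j ‖ k j)`. -/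
theorem renyi_finite_composable {J I : Type*} [Fintype J] [Fintype I]
    (d₁ d₂ : J → ℝ≥0∞) (h k : J → I → ℝ≥0∞)
    (hd₁ : ∑ j, d₁ j ≤ 1) (hd₂ : ∑ j, d₂ j ≤ 1)
    (hh : ∀ j, ∑ i, h j i ≤ 1) (hk : ∀ j, ∑ i, k j i ≤ 1)
    (α : ℝ) (hα : 1 < α) :
    renyiDE α (fun i => ∑ j, d₁ j * h j i) (fun i => ∑ j, d₂ j * k j i) ≤
      renyiDE α d₁ d₂ + ⨆ j, renyiDE α (h j) (k j) :=
  renyi_finite_composable_general d₁ d₂ h k hd₂ hk α hα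
end

section
/- Finite composability of the DP divergence family: let I, J be finite sets, d₁, d₂ subprobability mass functions on J, and h, k : J → subprob(I). Then Δ^{DP(ε₁+ε₂)}(h♯d₁, k♯d₂) ≤ Δ^{DP(ε₁)}(d₁, d₂) + sup_{j∈J} Δ^{DP(ε₂)}(h(j), k(j)), where Δ^{DP(ε)}(μ,ν) = ∑_i max(0, μ(i) − e^ε ν(i)). -/
open Finset

/-- The DP divergence `Δ^{DP(ε)}(μ,ν) = ∑ᵢ max(0, μ(i) − e^ε ν(i))` on a finite set. -/
noncomputable def dpDiv {I : Type*} [Fintype I] (ε : ℝ) (μ ν : I → ℝ) : ℝ :=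
  ∑ i, max 0 (μ i - Real.exp ε * ν i)

/-- Finite composability of the DP divergence family:
`Δ^{DP(ε₁+ε₂)}(h♯d₁, k♯d₂) ≤ Δ^{DP(ε₁)}(d₁,d₂) + sup_j Δ^{DP(ε₂)}(h j, k j)`. -/
theorem dp_finite_composable {J I : Type*} [Fintype J] [Fintype I]
    (d₁ d₂ : J → ℝ) (h k : J → I → ℝ)
    (hd₁0 : ∀ j, 0 ≤ d₁ j) (hd₂0 : ∀ j, 0 ≤ d₂ j)
    (hd₁s : ∑ j, d₁ j ≤ 1) (hd₂s : ∑ j, d₂ j ≤ 1)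
    (hh0 : ∀ j i, 0 ≤ h j i) (hk0 : ∀ j i, 0 ≤ k j i)
    (hhs : ∀ j, ∑ i, h j i ≤ 1) (hks : ∀ j, ∑ i, k j i ≤ 1)
    (ε₁ ε₂ : ℝ) (hε₁ : 0 ≤ ε₁) (hε₂ : 0 ≤ ε₂) :
    dpDiv (ε₁ + ε₂) (fun i => ∑ j, d₁ j * h j i) (fun i => ∑ j, d₂ j * k j i) ≤
      dpDiv ε₁ d₁ d₂ + ⨆ j, dpDiv ε₂ (h j) (k j) := by
  classical
  by_cases hJ : Nonempty J
  · set A : J → ℝ := fun j => max 0 (d₁ j - Real.exp ε₁ * d₂ j) with hAdef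
    set m : J → ℝ := fun j => min (d₁ j) (Real.exp ε₁ * d₂ j) with hmdef
    set B : J → I → ℝ := fun j i => max 0 (h j i - Real.exp ε₂ * k j i) with hBdef
    set S : ℝ := ⨆ j, dpDiv ε₂ (h j) (k j) with hSdef
    have hdp0 : ∀ j, 0 ≤ dpDiv ε₂ (h j) (k j) := fun j =>
      Finset.sum_nonneg fun i _ => le_max_left _ _
    have hSle : ∀ j, dpDiv ε₂ (h j) (k j) ≤ S := fun j =>
      le_ciSup (f := fun j => dpDiv ε₂ (h j) (k j)) (Set.Finite.bddAbove (Set.finite_range _)) j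
    have hS0 : 0 ≤ S := le_trans (hdp0 (Classical.arbitrary J)) (hSle _)
    have hA0 : ∀ j, 0 ≤ A j := fun j => le_max_left _ _
    have hm0 : ∀ j, 0 ≤ m j := fun j =>
      le_min (hd₁0 j) (mul_nonneg (Real.exp_pos ε₁).le (hd₂0 j))
    have hB0 : ∀ j i, 0 ≤ B j i := fun j i => le_max_left _ _
    -- pointwise bound
    have key : ∀ i, max 0 ((∑ j, d₁ j * h j i) - Real.exp (ε₁ + ε₂) * ∑ j, d₂ j * k j i)
        ≤ ∑ j, (A j * h j i + m j * B j i) := by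
      intro i
      apply max_le
      · exact Finset.sum_nonneg fun j _ => add_nonneg
          (mul_nonneg (hA0 j) (hh0 j i)) (mul_nonneg (hm0 j) (hB0 j i))
      · rw [Finset.mul_sum, ← Finset.sum_sub_distrib]
        apply Finset.sum_le_sum
        intro j _
        have hB : h j i - Real.exp ε₂ * k j i ≤ B j i := le_max_right _ _
        have hm1 : m j ≤ Real.exp ε₁ * d₂ j := min_le_right _ _
        have hAm : A j + m j = d₁ j := by
          simp only [hAdef, hmdef]
          rcases le_total (d₁ j) (Real.exp ε₁ * d₂ j) with h' | h'
          · rw [max_eq_left (by linarith), min_eq_left h']; ring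
          · rw [max_eq_right (by linarith), min_eq_right h']; ring
        have hexp : Real.exp (ε₁ + ε₂) = Real.exp ε₁ * Real.exp ε₂ := Real.exp_add ε₁ ε₂
        have p1 : m j * (h j i - Real.exp ε₂ * k j i) ≤ m j * B j i :=
          mul_le_mul_of_nonneg_left hB (hm0 j)
        have p2 : Real.exp ε₂ * k j i * m j ≤ Real.exp ε₂ * k j i * (Real.exp ε₁ * d₂ j) :=
          mul_le_mul_of_nonneg_left hm1 (mul_nonneg (Real.exp_pos ε₂).le (hk0 j i))
        have e1 : d₁ j * h j i = A j * h j i + m j * h j i := by rw [← hAm]; ring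
        have e2' : m j * (h j i - Real.exp ε₂ * k j i)
            = m j * h j i - Real.exp ε₂ * k j i * m j := by ring
        have e3 : Real.exp (ε₁ + ε₂) * (d₂ j * k j i)
            = Real.exp ε₂ * k j i * (Real.exp ε₁ * d₂ j) := by rw [hexp]; ring
        linarith
    calc dpDiv (ε₁ + ε₂) (fun i => ∑ j, d₁ j * h j i) (fun i => ∑ j, d₂ j * k j i)
        ≤ ∑ i, ∑ j, (A j * h j i + m j * B j i) := Finset.sum_le_sum fun i _ => key i
      _ = ∑ j, ((A j * ∑ i, h j i) + m j * dpDiv ε₂ (h j) (k j)) := by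
          rw [Finset.sum_comm]
          refine Finset.sum_congr rfl fun j _ => ?_
          rw [Finset.sum_add_distrib, ← Finset.mul_sum, ← Finset.mul_sum]
          rfl
      _ ≤ ∑ j, ((A j * 1) + m j * S) := by
          refine Finset.sum_le_sum fun j _ => ?_
          gcongr
          · exact hhs j
          · exact hm0 j
          · exact hSle j
      _ = dpDiv ε₁ d₁ d₂ + (∑ j, m j) * S := by
          rw [Finset.sum_add_distrib, Finset.sum_mul]
          simp [dpDiv, hAdef]
      _ ≤ dpDiv ε₁ d₁ d₂ + 1 * S := by
          gcongr
          exact le_trans (Finset.sum_le_sum fun j _ => min_le_left _ _) hd₁s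
      _ = dpDiv ε₁ d₁ d₂ + S := by ring
  · have : IsEmpty J := not_nonempty_iff.mp hJ
    simp [dpDiv, ciSup_of_empty]
end

section
/- RDP bound for the Gaussian mechanism: for real means m₁, m₂ with |m₁ − m₂| ≤ r, variance σ² > 0, and α > 1, the Rényi divergence of order α between N(m₁, σ²) and N(m₂, σ²) satisfies D^α(N(m₁,σ²) ‖ N(m₂,σ²)) = α(m₁−m₂)²/(2σ²) ≤ α r²/(2σ²). -/
open MeasureTheory ProbabilityTheory

/-!
Both Gaussians have densities with respect to Lebesgue measure, so `dμ₁/dμ₂` is the ratio of the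
densities. Completing the square in the exponent,
`f₂ (f₁ / f₂) ^ α = exp (α (α - 1) (m₁ - m₂)² / (2v)) · f_c` with `f_c` the density of
`N(α m₁ + (1 - α) m₂, v)`, so the integral defining the divergence is that exponential factor.
-/

/-- Rényi divergence of order `α` between measures on `ℝ`,
`D^α(μ‖ν) = (1/(α−1)) log ∫ (dμ/dν)^α dν`. -/
noncomputable def renyiDivM (α : ℝ) (μ ν : Measure ℝ) : ℝ :=
  (1 / (α - 1)) * Real.log (∫ x, ((μ.rnDeriv ν) x).toReal ^ α ∂ν)

open Real
open scoped NNReal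

section Gaussian

variable {m₁ m₂ : ℝ} {v : ℝ≥0}

lemma rnDeriv_gaussianReal_gaussianReal (hv : v ≠ 0) :
    ∀ᵐ x ∂gaussianReal m₂ v, ((gaussianReal m₁ v).rnDeriv (gaussianReal m₂ v) x).toReal =
      gaussianPDFReal m₁ v x / gaussianPDFReal m₂ v x := by
  have h_ac := gaussianReal_absolutelyContinuous m₂ hv
  filter_upwards [Measure.rnDeriv_eq_div (gaussianReal_absolutelyContinuous m₁ hv) h_ac,
    h_ac (rnDeriv_gaussianReal m₁ v), h_ac (rnDeriv_gaussianReal m₂ v)] with x hx h₁ h₂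
  rw [hx, h₁, h₂, ENNReal.toReal_div, toReal_gaussianPDF, toReal_gaussianPDF]

lemma gaussianPDFReal_mul_div_rpow (α x : ℝ) :
    gaussianPDFReal m₂ v x * (gaussianPDFReal m₁ v x / gaussianPDFReal m₂ v x) ^ α =
      exp (α * (α - 1) * (m₁ - m₂) ^ 2 / (2 * v)) *
        gaussianPDFReal (α * m₁ + (1 - α) * m₂) v x := by
  rcases eq_or_ne v 0 with rfl | hv
  · simp [gaussianPDFReal_zero_var]
  have hv' : (0 : ℝ) < v := NNReal.coe_pos.mpr (pos_iff_ne_zero.mpr hv)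
  have h_ratio : gaussianPDFReal m₁ v x / gaussianPDFReal m₂ v x =
      exp (((x - m₂) ^ 2 - (x - m₁) ^ 2) / (2 * v)) := by
    rw [gaussianPDFReal, gaussianPDFReal, mul_div_mul_left _ _ (by positivity), ← exp_sub]
    ring_nf
  rw [h_ratio, ← exp_mul, gaussianPDFReal, gaussianPDFReal, mul_assoc, ← exp_add,
    mul_left_comm, ← exp_add]
  congr 2
  field_simp
  ring

lemma integral_rnDeriv_rpow_gaussianReal (hv : v ≠ 0) (α : ℝ) :
    ∫ x, ((gaussianReal m₁ v).rnDeriv (gaussianReal m₂ v) x).toReal ^ α ∂gaussianReal m₂ v =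
      exp (α * (α - 1) * (m₁ - m₂) ^ 2 / (2 * v)) := by
  rw [integral_congr_ae ((rnDeriv_gaussianReal_gaussianReal hv).mono fun x hx => by rw [hx]),
    integral_gaussianReal_eq_integral_smul hv]
  simp only [smul_eq_mul, gaussianPDFReal_mul_div_rpow]
  rw [integral_const_mul, integral_gaussianPDFReal_eq_one _ hv, mul_one]

lemma renyiDivM_gaussianReal (hv : v ≠ 0) {α : ℝ} (hα : α ≠ 1) :
    renyiDivM α (gaussianReal m₁ v) (gaussianReal m₂ v) = α * (m₁ - m₂) ^ 2 / (2 * v) := by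
  rw [renyiDivM, integral_rnDeriv_rpow_gaussianReal hv, log_exp]
  field_simp [sub_ne_zero.mpr hα]

end Gaussian

/-- RDP bound for the Gaussian mechanism: for means at distance at most `r`
and common variance `v > 0`,
`D^α(N(m₁,v) ‖ N(m₂,v)) = α (m₁−m₂)²/(2v) ≤ α r²/(2v)` for every `α > 1`. -/
theorem renyi_gaussian (m₁ m₂ r : ℝ) (v : NNReal) (hv : v ≠ 0)
    (hr : |m₁ - m₂| ≤ r) (α : ℝ) (hα : 1 < α) :
    renyiDivM α (gaussianReal m₁ v) (gaussianReal m₂ v) =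
        α * (m₁ - m₂) ^ 2 / (2 * (v : ℝ)) ∧
      renyiDivM α (gaussianReal m₁ v) (gaussianReal m₂ v) ≤
        α * r ^ 2 / (2 * (v : ℝ)) := by
  have h_eq := renyiDivM_gaussianReal (m₁ := m₁) (m₂ := m₂) hv hα.ne'
  have h_sq : (m₁ - m₂) ^ 2 ≤ r ^ 2 := sq_abs (m₁ - m₂) ▸ pow_le_pow_left₀ (abs_nonneg _) hr 2
  refine ⟨h_eq, h_eq ▸ ?_⟩
  gcongr
end
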